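/- If two complete binary hash trees of the same depth have equal roots under an injective hash, then a Merkle proof verifying a value v at index i against one root also verifies v at i against the other root, and soundness transfers: v must equal the leaf at index i of either tree. -/

import Mathlib

variable {α β : Type*}

/-- Root of a complete binary Merkle tree of depth `d` over leaves `D`. -/
def mroot (Hl : α → β) (Hp : β → β → β) : (d : ℕ) → (Fin (2 ^ d) → α) → β
  | 0, D => Hl (D ⟨0, by norm_num⟩)
  | d + 1, D =>
      Hp (mroot Hl Hp d (fun i => D ⟨i.val, by have := i.isLt; simp [pow_succ]; omega⟩))
         (mroot Hl Hp d (fun i => D ⟨2 ^ d + i.val, by have := i.isLt; simp [pow_succ]; omega⟩))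

/-- Merkle verification fold: `mfold Hl Hp v π i t` is `h_{t+1}` in the paper's notation. -/
def mfold (Hl : α → β) (Hp : β → β → β) (v : α) (π : ℕ → β) (i : ℕ) : ℕ → β
  | 0 => Hl v
  | t + 1 =>
      if Nat.testBit i t then Hp (π t) (mfold Hl Hp v π i t)
      else Hp (mfold Hl Hp v π i t) (π t)

/-- Root of the depth-`k` subtree whose leaves are `D[j·2^k], …, D[(j+1)·2^k − 1]`. -/
def subRoot (Hl : α → β) (Hp : β → β → β) (d k : ℕ) (hk : k ≤ d)
    (D : Fin (2 ^ d) → α) (j : Fin (2 ^ (d - k))) : β :=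
  mroot Hl Hp k (fun i => D ⟨j.val * 2 ^ k + i.val, by
    have h1 := j.isLt; have h2 := i.isLt
    calc j.val * 2 ^ k + i.val < (j.val + 1) * 2 ^ k := by nlinarith
    _ ≤ 2 ^ (d - k) * 2 ^ k := by exact Nat.mul_le_mul_right _ (by omega)
    _ = 2 ^ d := by rw [← pow_add]; congr 1; omega⟩)

/-!
Injectivity of `Hp` splits equal roots into equal roots of the two half-trees, so induction on
the depth reaches the leaves, where `Hl` is injective: equal roots force equal leaves. A
verifying fold is peeled the same way: bit `t` of the index says on which side of the pair the
fold sits at level `t + 1`, so it matches the root of the half-tree containing leaf `i`.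
-/

open Function

theorem eq_and_eq_of_injective_uncurry {γ δ ε : Type*} {f : γ → δ → ε}
    (hf : Injective fun p : γ × δ => f p.1 p.2) {a c : γ} {b e : δ} (h : f a b = f c e) :
    a = c ∧ b = e :=
  Prod.mk.inj (@hf (a, b) (c, e) h)

theorem mod_two_pow_succ_eq_add_testBit (i d : ℕ) :
    i % 2 ^ (d + 1) = i % 2 ^ d + 2 ^ d * (i.testBit d).toNat := by
  rw [Nat.mod_pow_succ, Nat.toNat_testBit]

section

variable {Hl : α → β} {Hp : β → β → β}

theorem mroot_injective (hHl : Injective Hl) (hHp : Injective fun p : β × β => Hp p.1 p.2) :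
    ∀ d, Injective (mroot Hl Hp d)
  | 0, D, D', h => funext fun i => by
      obtain rfl : i = ⟨0, by norm_num⟩ := Fin.ext (Nat.lt_one_iff.mp i.isLt)
      exact hHl h
  | d + 1, D, D', h => by
      obtain ⟨hleft, hright⟩ := eq_and_eq_of_injective_uncurry hHp h
      have hleft := congrFun (mroot_injective hHl hHp d hleft)
      have hright := congrFun (mroot_injective hHl hHp d hright)
      funext i
      by_cases hi : i.val < 2 ^ d
      · exact hleft ⟨i, hi⟩
      · have hi' : i.val - 2 ^ d < 2 ^ d := by have := i.isLt.trans_eq (pow_succ 2 d); omega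
        convert hright ⟨i - 2 ^ d, hi'⟩ using 2 <;> ext <;> simp only <;> omega

theorem eq_of_mfold_eq_mroot (hHl : Injective Hl) (hHp : Injective fun p : β × β => Hp p.1 p.2)
    {v : α} {π : ℕ → β} (i : ℕ) :
    ∀ {d} {D : Fin (2 ^ d) → α}, mfold Hl Hp v π i d = mroot Hl Hp d D →
      v = D ⟨i % 2 ^ d, Nat.mod_lt _ (by positivity)⟩
  | 0, _, h => by
      rw [mfold, mroot] at h
      exact (hHl h).trans (congrArg _ (Fin.ext (Nat.mod_one i).symm))
  | d + 1, D, h => by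
      have hidx := mod_two_pow_succ_eq_add_testBit i d
      rw [mfold, mroot] at h
      cases hbit : i.testBit d
      · rw [if_neg (by simp [hbit])] at h
        rw [eq_of_mfold_eq_mroot hHl hHp i (eq_and_eq_of_injective_uncurry hHp h).1]
        congr 2
        simp [hidx, hbit]
      · rw [if_pos hbit] at h
        rw [eq_of_mfold_eq_mroot hHl hHp i (eq_and_eq_of_injective_uncurry hHp h).2]
        congr 2
        simp [hidx, hbit, add_comm]

end

/-- **Soundness transfers across equal roots.** If two complete binary hash trees of
the same depth have equal roots under injective hashes, then a Merkle proof verifying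
value `v` at index `i` against one root also verifies `v` at `i` against the other
root, and `v` equals the leaf at index `i` of either tree. -/
theorem merkle_equal_roots_transfer (Hl : α → β) (Hp : β → β → β)
    (hHl : Function.Injective Hl)
    (hHp : Function.Injective fun p : β × β => Hp p.1 p.2)
    (d : ℕ) (D D' : Fin (2 ^ d) → α)
    (hroot : mroot Hl Hp d D = mroot Hl Hp d D')
    (v : α) (π : ℕ → β) (i : Fin (2 ^ d))
    (hver : mfold Hl Hp v π i.val d = mroot Hl Hp d D) :
    mfold Hl Hp v π i.val d = mroot Hl Hp d D' ∧ v = D i ∧ v = D' i := by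
  obtain rfl : D = D' := mroot_injective hHl hHp d hroot
  have hv : v = D i := by simpa [Nat.mod_eq_of_lt i.isLt] using eq_of_mfold_eq_mroot hHl hHp i hver
  exact ⟨hver, hv, hv⟩
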